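/- If 𝒜(ū) and ℬ(ū) are q-symmetric generating series, then their ⋆-product 𝒜 ⋆ ℬ is again a q-symmetric generating series: its free coefficient equals 1 and each coefficient (𝒜⋆ℬ)(t̄_{n̄}) is q-symmetric in the variables of each type. -/

import Mathlib

noncomputable section

open scoped TensorProduct
open MvPolynomial

/-! ## Rational functions and the q-symmetrization machinery -/

variable (K : Type) [Field K] (ι : Type)

/-- The field `K(t)` of rational functions in the variables `t_i`, `i : ι`. -/
abbrev RatF := FractionRing (MvPolynomial ι K)

/-- The variable `t_i` as a rational function. -/
def tvar (i : ι) : RatF K ι := algebraMap (MvPolynomial ι K) (RatF K ι) (X i)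

/-- A scalar `c : K` as a constant rational function. -/
def cst (c : K) : RatF K ι := algebraMap K (RatF K ι) c

/-- Substitution of variables `t_i ↦ t_{f i}` along an injective map `f`, as a `K`-algebra
endomorphism of the field of rational functions. -/
def renHom (f : ι → ι) (hf : Function.Injective f) : RatF K ι →ₐ[K] RatF K ι :=
  IsFractionRing.liftAlgHom (R := K)
    (g := (IsScalarTower.toAlgHom K (MvPolynomial ι K) (RatF K ι)).comp (rename f))
    ((IsFractionRing.injective _ _).comp (rename_injective f hf))

variable (A : Type) [Ring A] [Algebra K A]

/-- The algebra `A(t) = A ⊗_K K(t)` of `A`-valued rational functions. -/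
abbrev AVal := A ⊗[K] RatF K ι

/-- The embedding `K(t) → A(t)`. -/
def inF : RatF K ι →ₐ[K] AVal K ι A := Algebra.TensorProduct.includeRight

/-- Substitution of variables `t_i ↦ t_{f i}` on `A`-valued rational functions. -/
def renA (f : ι → ι) (hf : Function.Injective f) : AVal K ι A →ₐ[K] AVal K ι A :=
  Algebra.TensorProduct.map (AlgHom.id K A) (renHom K ι f hf)

/-- Extension of a permutation of `Fin k` to a permutation of the whole variable index set `ι`
along an injective enumeration `v : Fin k → ι` of some of the variables. -/
def extPerm {k : ℕ} (v : Fin k → ι) (hv : Function.Injective v) (σ : Equiv.Perm (Fin k)) :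
    Equiv.Perm ι :=
  letI := Classical.decPred (· ∈ Set.range v)
  σ.extendDomain (Equiv.ofInjective v hv)

variable (q : K)

/-- The elementary weight `w(t_i/t_j) = (q⁻¹ − q t_i/t_j)/(q − q⁻¹ t_i/t_j)`. -/
def wfac (i j : ι) : RatF K ι :=
  (cst K ι q⁻¹ - cst K ι q * (tvar K ι i / tvar K ι j)) /
    (cst K ι q - cst K ι q⁻¹ * (tvar K ι i / tvar K ι j))

/-- The weight `∏_{ℓ<ℓ', σ(ℓ)>σ(ℓ')} w(t_{σ(ℓ')}/t_{σ(ℓ)})` of the operator `π(σ)` acting on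
functions of the variables `t_{v 0}, …, t_{v (k-1)}`. -/
def qWeight {k : ℕ} (v : Fin k → ι) (σ : Equiv.Perm (Fin k)) : RatF K ι :=
  ∏ p ∈ Finset.univ.filter (fun p : Fin k × Fin k => p.1 < p.2 ∧ σ p.2 < σ p.1),
    wfac K ι q (v (σ p.2)) (v (σ p.1))

/-- The operator `π(σ)`, `σ ∈ S_k`:
`π(σ)G = ∏_{ℓ<ℓ', σ(ℓ)>σ(ℓ')} w(t_{σ(ℓ')}/t_{σ(ℓ)}) ⬝ G(t_{σ(1)},…,t_{σ(k)})`, acting on `A`-valued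
rational functions of the variables `t_{v 0}, …, t_{v (k-1)}`. -/
def piOp {k : ℕ} (v : Fin k → ι) (hv : Function.Injective v) (σ : Equiv.Perm (Fin k)) :
    AVal K ι A → AVal K ι A := fun G =>
  inF K ι A (qWeight K ι q v σ) * renA K ι A (extPerm ι v hv σ) (Equiv.injective _) G

/-- The operator `π(σ_{i,j})` attached to a transposition:
`π(σ_{i,j})G = w(t_i/t_j) ⬝ (G with t_i, t_j interchanged)`.  For `j = i+1` this is the
operator `π(σ_{i,i+1})` of the paper. -/
def piElem (i j : ι) : AVal K ι A → AVal K ι A := fun G =>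
  letI := Classical.decEq ι
  inF K ι A (wfac K ι q i j) * renA K ι A (Equiv.swap i j) (Equiv.injective _) G

/-- The `q`-symmetrization operator `Sym̄ = (1/k!) ∑_{σ ∈ S_k} π(σ)` over the variables
`t_{v 0}, …, t_{v (k-1)}`. -/
def qSym {k : ℕ} (v : Fin k → ι) (hv : Function.Injective v) :
    AVal K ι A → AVal K ι A := fun G =>
  ((k.factorial : K))⁻¹ • ∑ σ : Equiv.Perm (Fin k), piOp K ι A q v hv σ G

/-! ## Multi-type generating series -/

/-- For the algebra with `N − 1` types of variables, the variables are `t^a_i`, indexed by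
pairs `(a, i) : ℕ × ℕ` (the type `a` and the position `i`). -/
abbrev ιM : Type := ℕ × ℕ

/-- The enumeration of the first `m` variables of type `a`. -/
def vtype (a m : ℕ) : Fin m → ιM := fun i => (a, (i : ℕ))

theorem vtype_inj (a m : ℕ) : Function.Injective (vtype a m) := fun x y h =>
  Fin.val_injective (congrArg Prod.snd h)

/-- The `q`-symmetrization over the variables `t̄_{n̄}`, applied independently to the variables
of each type: for each type `a` the first `n̄ a` variables of that type are `q`-symmetrized. -/
def symM (n : ℕ →₀ ℕ) : AVal K ιM A → AVal K ιM A :=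
  (n.support.sort (· ≤ ·)).foldr
    (fun a F => (qSym K ιM A q (vtype a (n a)) (vtype_inj a (n a)) ∘ F)) id

/-- The shift of variables `t^a_i ↦ t^a_{i + s a}` (each type shifted by its own amount). -/
def shiftFun (s : ℕ → ℕ) : ιM → ιM := fun x => (x.1, x.2 + s x.1)

theorem shiftFun_inj (s : ℕ → ℕ) : Function.Injective (shiftFun s) := by
  rintro ⟨a, i⟩ ⟨b, j⟩ h
  simp only [shiftFun, Prod.mk.injEq] at h
  obtain ⟨rfl, h2⟩ := h
  simp only [Prod.mk.injEq, true_and]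
  omega

/-- The rational series `Z_{s̄}(t̄_{n̄})`. -/
def Zser (N : ℕ) (s n : ℕ →₀ ℕ) : RatF K ιM :=
  ∏ a ∈ Finset.range (N - 2), ∏ l ∈ Finset.Ico (s a) (n a), ∏ l' ∈ Finset.range (s (a + 1)),
    (cst K ιM q - cst K ιM q⁻¹ * (tvar K ιM (a, l) / tvar K ιM (a + 1, l'))) /
      (1 - tvar K ιM (a, l) / tvar K ιM (a + 1, l'))

/-- A `q`-symmetric generating series in the parameters `u_1, …, u_{N-1}`: the family of its
coefficients `𝒜(t̄_{n̄})`, indexed by multi-indices `n̄` (finitely supported, and supported on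
the types `1, …, N−1`, represented `0`-based as `{0, …, N−2}`); the coefficient `𝒜(t̄_{n̄})`
is an `A`-valued rational function depending only on the variables `t̄_{n̄}`, `q`-symmetric in
the variables of each type, and the free coefficient is `1`. -/
structure QSeriesM (N : ℕ) : Type where
  /-- The coefficient at `u_1^{n̄ 0} ⋯ u_{N-1}^{n̄ (N-2)}`. -/
  coeff : (ℕ →₀ ℕ) → AVal K ιM A
  coeff_zero : coeff 0 = 1
  supp_types : ∀ n : ℕ →₀ ℕ, (¬ ∀ a, N - 1 ≤ a → n a = 0) → coeff n = 0
  qsymm : ∀ (n : ℕ →₀ ℕ) (a : ℕ) (σ : Equiv.Perm (Fin (n a))),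
    piOp K ιM A q (vtype a (n a)) (vtype_inj a (n a)) σ (coeff n) = coeff n
  supp_vars : ∀ (n : ℕ →₀ ℕ) (f : ιM → ιM) (hf : Function.Injective f),
    (∀ a i, i < n a → f (a, i) = (a, i)) → renA K ιM A f hf (coeff n) = coeff n

/-- The coefficient at `u^{n̄}` of the `⋆`-product of two generating series given by their
coefficient families:
`(𝒜⋆ℬ)(t̄_{n̄}) = ∑_{0̄ ≤ s̄ ≤ n̄} Sym̄_{t̄_{n̄}}( Z_{s̄}(t̄_{n̄}) ⬝ 𝒜(t̄_{(s̄,n̄]}) ⬝ ℬ(t̄_{(0̄,s̄]}) )`. -/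
def starM (N : ℕ) (f g : (ℕ →₀ ℕ) → AVal K ιM A) (n : ℕ →₀ ℕ) : AVal K ιM A :=
  ∑ s ∈ Finset.Iic n,
    symM K A q n
      (inF K ιM A (Zser K q N s n) *
        (renA K ιM A (shiftFun (s ·)) (shiftFun_inj _) (f (n - s)) * g s))

/-- The coefficients of the unit generating series `1`. -/
def oneM : (ℕ →₀ ℕ) → AVal K ιM A := fun n => if n = 0 then 1 else 0

/-- A multi-index is admissible if `n_1 ≥ n_2 ≥ ⋯`. -/
def Adm (n : ℕ →₀ ℕ) : Prop := ∀ a, n (a + 1) ≤ n a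

/-!
The operators `π(σ)` form a genuine action of `S_k`. The weight of `π(σ)` is a product over the
inversions of `σ`, and the weight of `στ` is the weight of `σ` times the `σ`-transform of the
weight of `τ`: a pair inverted by `τ` and inverted back by `σ` contributes `w(x) w(x⁻¹) = 1`.
Hence `π(σ) ∘ Sym̄ = Sym̄`, by reindexing the sum over `S_k`. Operators on variables of different
types commute, since they move disjoint sets of variables and fix each other's weights, so
`π(σ)` fixes every summand `Sym̄_{t̄_{n̄}}(…)` of the `⋆`-product. The free coefficient has the
single summand `s̄ = 0̄`, where `Z = 1` and both factors are `1`.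
-/

section Substitution

variable {K ι A}

theorem renHom_tvar (f : ι → ι) (hf : Function.Injective f) (i : ι) :
    renHom K ι f hf (tvar K ι i) = tvar K ι (f i) := by
  simp [renHom, tvar, IsFractionRing.liftAlgHom_apply, IsScalarTower.toAlgHom]

theorem cst_eq_algebraMap_C (c : K) :
    cst K ι c = algebraMap (MvPolynomial ι K) (RatF K ι) (C c) :=
  IsScalarTower.algebraMap_apply K (MvPolynomial ι K) (RatF K ι) c

theorem RatF.algHom_ext {S : Type} [CommRing S] [Algebra K S] {φ ψ : RatF K ι →ₐ[K] S}
    (h : ∀ i, φ (tvar K ι i) = ψ (tvar K ι i)) : φ = ψ := by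
  apply AlgHom.coe_ringHom_injective
  apply IsLocalization.ringHom_ext (nonZeroDivisors (MvPolynomial ι K))
  apply MvPolynomial.ringHom_ext
  · intro c
    simp only [RingHom.comp_apply, RingHom.coe_coe, ← cst_eq_algebraMap_C]
    exact (φ.commutes c).trans (ψ.commutes c).symm
  · exact h

theorem renHom_comp (f g : ι → ι) (hf : Function.Injective f) (hg : Function.Injective g) :
    (renHom K ι f hf).comp (renHom K ι g hg) = renHom K ι (f ∘ g) (hf.comp hg) :=
  RatF.algHom_ext fun i => by simp [renHom_tvar]

theorem renHom_id (h : Function.Injective (id : ι → ι)) :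
    renHom K ι id h = AlgHom.id K (RatF K ι) :=
  RatF.algHom_ext fun i => by simp [renHom_tvar]

theorem renA_inF (f : ι → ι) (hf : Function.Injective f) (x : RatF K ι) :
    renA K ι A f hf (inF K ι A x) = inF K ι A (renHom K ι f hf x) := by
  simp [renA, inF, Algebra.TensorProduct.map_tmul]

theorem renA_renA (f g : ι → ι) (hf : Function.Injective f) (hg : Function.Injective g)
    (G : AVal K ι A) :
    renA K ι A f hf (renA K ι A g hg G) = renA K ι A (f ∘ g) (hf.comp hg) G := by
  rw [renA, renA, renA, ← AlgHom.comp_apply, ← Algebra.TensorProduct.map_comp, renHom_comp,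
    AlgHom.comp_id]

theorem renA_congr {f g : ι → ι} (hf : Function.Injective f) (hg : Function.Injective g)
    (h : f = g) : renA K ι A f hf = renA K ι A g hg := by
  subst h
  rfl

theorem renA_id (h : Function.Injective (id : ι → ι)) (G : AVal K ι A) :
    renA K ι A id h G = G := by
  rw [renA, renHom_id, Algebra.TensorProduct.map_id, AlgHom.id_apply]

end Substitution

section Weight

variable {K ι}

theorem tvar_ne_zero (i : ι) : tvar K ι i ≠ 0 :=
  (map_ne_zero_iff _ (IsFractionRing.injective (MvPolynomial ι K) (RatF K ι))).mpr (X_ne_zero i)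

theorem tvar_div_tvar_ne_cst {i j : ι} (hij : i ≠ j) (c : K) :
    tvar K ι i / tvar K ι j ≠ cst K ι c := by
  classical
  intro h
  rw [div_eq_iff (tvar_ne_zero j), cst_eq_algebraMap_C, tvar, tvar, ← map_mul] at h
  have hc := congrArg (MvPolynomial.coeff (Finsupp.single i 1))
    (IsFractionRing.injective (MvPolynomial ι K) (RatF K ι) h)
  rw [MvPolynomial.coeff_X_same, MvPolynomial.coeff_C_mul, MvPolynomial.coeff_X, if_neg,
    mul_zero] at hc
  · exact one_ne_zero hc
  · rw [Finsupp.single_left_inj one_ne_zero]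
    exact hij.symm

theorem weight_mul_weight_inv {F : Type} [Field F] {c x : F} (hc : c ≠ 0) (hx : x ≠ 0)
    (h₁ : c - c⁻¹ * x ≠ 0) (h₂ : c - c⁻¹ * x⁻¹ ≠ 0) :
    (c⁻¹ - c * x) / (c - c⁻¹ * x) * ((c⁻¹ - c * x⁻¹) / (c - c⁻¹ * x⁻¹)) = 1 := by
  rw [div_mul_div_comm, div_eq_one_iff_eq (mul_ne_zero h₁ h₂)]
  field_simp
  ring

theorem wfac_mul_wfac (hq : q ≠ 0) {i j : ι} (hij : i ≠ j) :
    wfac K ι q i j * wfac K ι q j i = 1 := by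
  have hQ : cst K ι q ≠ 0 := (map_ne_zero_iff _ (algebraMap K (RatF K ι)).injective).mpr hq
  have hQinv : cst K ι q⁻¹ = (cst K ι q)⁻¹ := map_inv₀ (algebraMap K (RatF K ι)) q
  -- the denominator vanishes only where `t_a / t_b` is the constant `q²`
  have hden : ∀ a b : ι, a ≠ b → cst K ι q - (cst K ι q)⁻¹ * (tvar K ι a / tvar K ι b) ≠ 0 := by
    intro a b hab h
    apply tvar_div_tvar_ne_cst hab (q * q)
    field_simp at h
    rw [cst, map_mul, ← cst]
    linear_combination -h
  have hinv : tvar K ι j / tvar K ι i = (tvar K ι i / tvar K ι j)⁻¹ := (inv_div _ _).symm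
  have hden' := hden j i hij.symm
  rw [hinv] at hden'
  rw [wfac, wfac, hinv, hQinv]
  exact weight_mul_weight_inv hQ (div_ne_zero (tvar_ne_zero i) (tvar_ne_zero j)) (hden i j hij)
    hden'

theorem renHom_wfac (f : ι → ι) (hf : Function.Injective f) (i j : ι) :
    renHom K ι f hf (wfac K ι q i j) = wfac K ι q (f i) (f j) := by
  simp only [wfac, cst, map_div₀, map_sub, map_mul, renHom_tvar, AlgHom.commutes]

end Weight

section ExtPerm

variable {ι}
variable {k : ℕ} {v : Fin k → ι} (hv : Function.Injective v)

theorem extPerm_apply_self (σ : Equiv.Perm (Fin k)) (i : Fin k) :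
    extPerm ι v hv σ (v i) = v (σ i) := by
  let _ := Classical.decPred (· ∈ Set.range v)
  simpa [extPerm, Equiv.ofInjective] using
    Equiv.Perm.extendDomain_apply_image σ (Equiv.ofInjective v hv) i

theorem extPerm_apply_of_notMem (σ : Equiv.Perm (Fin k)) {x : ι} (hx : x ∉ Set.range v) :
    extPerm ι v hv σ x = x := by
  let _ := Classical.decPred (· ∈ Set.range v)
  exact Equiv.Perm.extendDomain_apply_not_subtype _ _ hx

theorem extPerm_mul (σ τ : Equiv.Perm (Fin k)) :
    extPerm ι v hv (σ * τ) = extPerm ι v hv σ * extPerm ι v hv τ := by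
  let _ := Classical.decPred (· ∈ Set.range v)
  exact (Equiv.Perm.extendDomain_mul _ _ _).symm

theorem extPerm_one : extPerm ι v hv 1 = 1 := by
  let _ := Classical.decPred (· ∈ Set.range v)
  exact Equiv.Perm.extendDomain_one _

theorem extPerm_commute_of_disjoint {m : ℕ} {w : Fin m → ι} (hw : Function.Injective w)
    (hvw : Disjoint (Set.range v) (Set.range w)) (σ : Equiv.Perm (Fin k))
    (τ : Equiv.Perm (Fin m)) : Commute (extPerm ι v hv σ) (extPerm ι w hw τ) := by
  have hv_notMem : ∀ i, v i ∉ Set.range w := fun i => hvw.notMem_of_mem_left ⟨i, rfl⟩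
  have hw_notMem : ∀ j, w j ∉ Set.range v := fun j => hvw.notMem_of_mem_right ⟨j, rfl⟩
  ext x
  simp only [Equiv.Perm.coe_mul, Function.comp_apply]
  by_cases hxv : x ∈ Set.range v
  · obtain ⟨i, rfl⟩ := hxv
    rw [extPerm_apply_of_notMem hw τ (hv_notMem i), extPerm_apply_self,
      extPerm_apply_of_notMem hw τ (hv_notMem _)]
  by_cases hxw : x ∈ Set.range w
  · obtain ⟨j, rfl⟩ := hxw
    rw [extPerm_apply_of_notMem hv σ (hw_notMem j), extPerm_apply_self,
      extPerm_apply_of_notMem hv σ (hw_notMem _)]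
  rw [extPerm_apply_of_notMem hv σ hxv, extPerm_apply_of_notMem hw τ hxw,
    extPerm_apply_of_notMem hv σ hxv]

end ExtPerm

section Cocycle

variable {K ι}
variable {k : ℕ}

def inversionFactor (v : Fin k → ι) (σ : Equiv.Perm (Fin k)) (p : Fin k × Fin k) : RatF K ι :=
  if σ p.2 < σ p.1 then wfac K ι q (v (σ p.2)) (v (σ p.1)) else 1

theorem qWeight_eq_prod_inversionFactor (v : Fin k → ι) (σ : Equiv.Perm (Fin k)) :
    qWeight K ι q v σ = ∏ p ∈ Finset.univ.filter (fun p : Fin k × Fin k => p.1 < p.2),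
      inversionFactor q v σ p := by
  unfold qWeight inversionFactor
  rw [← Finset.filter_filter, Finset.prod_filter]

def sortPair (τ : Equiv.Perm (Fin k)) (p : Fin k × Fin k) : Fin k × Fin k :=
  if τ p.1 < τ p.2 then (τ p.1, τ p.2) else (τ p.2, τ p.1)

theorem sortPair_lt (τ : Equiv.Perm (Fin k)) {p : Fin k × Fin k} (hp : p.1 < p.2) :
    (sortPair τ p).1 < (sortPair τ p).2 := by
  have hne : τ p.1 ≠ τ p.2 := τ.injective.ne hp.ne
  unfold sortPair
  split_ifs with h
  · exact h
  · exact lt_of_le_of_ne (not_lt.mp h) hne.symm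

theorem sortPair_inv_sortPair (τ : Equiv.Perm (Fin k)) {p : Fin k × Fin k} (hp : p.1 < p.2) :
    sortPair τ⁻¹ (sortPair τ p) = p := by
  unfold sortPair
  split_ifs <;> simp_all [lt_asymm hp]

theorem prod_sortPair {M : Type} [CommMonoid M] (τ : Equiv.Perm (Fin k))
    (f : Fin k × Fin k → M) :
    ∏ p ∈ Finset.univ.filter (fun p : Fin k × Fin k => p.1 < p.2), f (sortPair τ p) =
      ∏ p ∈ Finset.univ.filter (fun p : Fin k × Fin k => p.1 < p.2), f p := by
  refine Finset.prod_nbij' (sortPair τ) (sortPair τ⁻¹) ?_ ?_ ?_ ?_ fun _ _ => rfl <;>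
    intro p hp <;> simp only [Finset.mem_filter, Finset.mem_univ, true_and] at hp ⊢
  · exact sortPair_lt τ hp
  · exact sortPair_lt τ⁻¹ hp
  · exact sortPair_inv_sortPair τ hp
  · simpa only [inv_inv] using sortPair_inv_sortPair τ⁻¹ hp

theorem inversionFactor_mul (hq : q ≠ 0) {v : Fin k → ι} (hv : Function.Injective v)
    (σ τ : Equiv.Perm (Fin k)) {p : Fin k × Fin k} (hp : p.1 < p.2) :
    inversionFactor q v (σ * τ) p =
      inversionFactor q v σ (sortPair τ p) *
        renHom K ι (extPerm ι v hv σ) (Equiv.injective _) (inversionFactor q v τ p) := by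
  have hτ : τ p.1 ≠ τ p.2 := τ.injective.ne hp.ne
  have hστ : σ (τ p.1) ≠ σ (τ p.2) := σ.injective.ne hτ
  simp only [inversionFactor, sortPair, Equiv.Perm.mul_apply, apply_ite (renHom K ι _ _),
    map_one, renHom_wfac, extPerm_apply_self]
  rcases hτ.lt_or_gt with h | h <;> rcases hστ.lt_or_gt with h' | h' <;>
    simp only [h, h', lt_asymm h, lt_asymm h', if_true, if_false, mul_one, one_mul]
  exact (wfac_mul_wfac q hq (hv.ne h'.ne)).symm

theorem qWeight_mul (hq : q ≠ 0) {v : Fin k → ι} (hv : Function.Injective v)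
    (σ τ : Equiv.Perm (Fin k)) :
    qWeight K ι q v (σ * τ) =
      qWeight K ι q v σ *
        renHom K ι (extPerm ι v hv σ) (Equiv.injective _) (qWeight K ι q v τ) := by
  rw [qWeight_eq_prod_inversionFactor, qWeight_eq_prod_inversionFactor,
    qWeight_eq_prod_inversionFactor, map_prod, ← prod_sortPair τ (inversionFactor q v σ),
    ← Finset.prod_mul_distrib]
  refine Finset.prod_congr rfl fun p hp => ?_
  exact inversionFactor_mul q hq hv σ τ (Finset.mem_filter.mp hp).2

end Cocycle

section Action

variable {K ι A}
variable {k : ℕ} {v : Fin k → ι} (hv : Function.Injective v)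

theorem piOp_piOp (hq : q ≠ 0) (σ τ : Equiv.Perm (Fin k)) (G : AVal K ι A) :
    piOp K ι A q v hv σ (piOp K ι A q v hv τ G) = piOp K ι A q v hv (σ * τ) G := by
  rw [piOp, piOp, piOp, map_mul, renA_inF, renA_renA, ← mul_assoc, ← map_mul,
    ← qWeight_mul q hq hv, renA_congr (g := extPerm ι v hv (σ * τ)) _ (Equiv.injective _)
      (by rw [extPerm_mul, Equiv.Perm.coe_mul])]

theorem piOp_one (G : AVal K ι A) : piOp K ι A q v hv 1 G = G := by
  have hweight : qWeight K ι q v (1 : Equiv.Perm (Fin k)) = 1 :=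
    Finset.prod_eq_one fun p hp =>
      absurd (Finset.mem_filter.mp hp).2.2 (lt_asymm (Finset.mem_filter.mp hp).2.1)
  rw [piOp, hweight, map_one, one_mul,
    renA_congr (g := id) _ Function.injective_id (by rw [extPerm_one, Equiv.Perm.coe_one]),
    renA_id]

theorem piOp_smul (σ : Equiv.Perm (Fin k)) (c : K) (G : AVal K ι A) :
    piOp K ι A q v hv σ (c • G) = c • piOp K ι A q v hv σ G := by
  rw [piOp, piOp, map_smul, mul_smul_comm]

theorem piOp_sum (σ : Equiv.Perm (Fin k)) {β : Type} (s : Finset β) (G : β → AVal K ι A) :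
    piOp K ι A q v hv σ (∑ b ∈ s, G b) = ∑ b ∈ s, piOp K ι A q v hv σ (G b) := by
  rw [piOp, map_sum, Finset.mul_sum]
  rfl

theorem piOp_qSym (hq : q ≠ 0) (σ : Equiv.Perm (Fin k)) (G : AVal K ι A) :
    piOp K ι A q v hv σ (qSym K ι A q v hv G) = qSym K ι A q v hv G := by
  rw [qSym, piOp_smul, piOp_sum]
  simp only [piOp_piOp q hv hq]
  exact congrArg _ (Fintype.sum_equiv (Equiv.mulLeft σ) _ _ fun τ => rfl)

variable {m : ℕ} {w : Fin m → ι} (hw : Function.Injective w)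
  (hvw : Disjoint (Set.range v) (Set.range w))
include hvw

theorem renHom_qWeight_of_disjoint (σ : Equiv.Perm (Fin k)) (τ : Equiv.Perm (Fin m)) :
    renHom K ι (extPerm ι v hv σ) (Equiv.injective _) (qWeight K ι q w τ) =
      qWeight K ι q w τ := by
  have hfix : ∀ j, extPerm ι v hv σ (w j) = w j :=
    fun j => extPerm_apply_of_notMem hv σ (hvw.notMem_of_mem_right ⟨j, rfl⟩)
  simp only [qWeight, map_prod, renHom_wfac, hfix]

theorem piOp_comm_of_disjoint (σ : Equiv.Perm (Fin k)) (τ : Equiv.Perm (Fin m))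
    (G : AVal K ι A) :
    piOp K ι A q v hv σ (piOp K ι A q w hw τ G) =
      piOp K ι A q w hw τ (piOp K ι A q v hv σ G) := by
  rw [piOp, piOp, piOp, piOp, map_mul, renA_inF, renA_renA, map_mul, renA_inF, renA_renA,
    ← mul_assoc, ← mul_assoc, ← map_mul, ← map_mul, renHom_qWeight_of_disjoint q hv hvw,
    renHom_qWeight_of_disjoint q hw hvw.symm, mul_comm (qWeight K ι q v σ)]
  congr 2
  exact renA_congr _ _ (congrArg DFunLike.coe (extPerm_commute_of_disjoint hv hw hvw σ τ).eq)

theorem piOp_qSym_comm_of_disjoint (σ : Equiv.Perm (Fin k)) (G : AVal K ι A) :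
    piOp K ι A q v hv σ (qSym K ι A q w hw G) = qSym K ι A q w hw (piOp K ι A q v hv σ G) := by
  simp only [qSym, piOp_smul, piOp_sum, piOp_comm_of_disjoint q hv hw hvw]

end Action

section Types

variable {K A}

theorem disjoint_range_vtype {a b : ℕ} (hab : a ≠ b) (k m : ℕ) :
    Disjoint (Set.range (vtype a k)) (Set.range (vtype b m)) := by
  rw [Set.disjoint_left]
  rintro _ ⟨i, rfl⟩ ⟨j, hj⟩
  exact hab (congrArg Prod.fst hj).symm

theorem piOp_foldr_qSym (hq : q ≠ 0) (n : ℕ →₀ ℕ) {a : ℕ} (σ : Equiv.Perm (Fin (n a)))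
    {L : List ℕ} (ha : a ∈ L) (G : AVal K ιM A) :
    piOp K ιM A q (vtype a (n a)) (vtype_inj a (n a)) σ
        (L.foldr (fun b F => (qSym K ιM A q (vtype b (n b)) (vtype_inj b (n b)) ∘ F)) id G) =
      L.foldr (fun b F => (qSym K ιM A q (vtype b (n b)) (vtype_inj b (n b)) ∘ F)) id G := by
  induction L with
  | nil => exact absurd ha List.not_mem_nil
  | cons b L ih =>
    simp only [List.foldr_cons, Function.comp_apply]
    by_cases hab : a = b
    · subst hab
      exact piOp_qSym q _ hq σ _
    · rw [piOp_qSym_comm_of_disjoint q _ _ (disjoint_range_vtype hab _ _),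
        ih ((List.mem_cons.mp ha).resolve_left hab)]

theorem piOp_symM (hq : q ≠ 0) (n : ℕ →₀ ℕ) (a : ℕ) (σ : Equiv.Perm (Fin (n a)))
    (G : AVal K ιM A) :
    piOp K ιM A q (vtype a (n a)) (vtype_inj a (n a)) σ (symM K A q n G) = symM K A q n G := by
  by_cases hna : n a = 0
  · obtain rfl : σ = 1 := Equiv.ext fun x => absurd x.isLt (by omega)
    exact piOp_one q _ _
  · exact piOp_foldr_qSym q hq n σ
      ((Finset.mem_sort _).mpr (Finsupp.mem_support_iff.mpr hna)) G

theorem symM_zero (G : AVal K ιM A) : symM K A q 0 G = G := by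
  rw [symM, Finsupp.support_zero, Finset.sort_empty]
  rfl

theorem Zser_zero_zero (N : ℕ) : Zser K q N 0 0 = 1 :=
  Finset.prod_eq_one fun _ _ => by simp

end Types

theorem star_closed_general
    (K : Type) [Field K] (q : K) (hq : q ≠ 0)
    (A : Type) [Ring A] [Algebra K A] (N : ℕ) (SA SB : QSeriesM K A q N) :
    starM K A q N SA.coeff SB.coeff 0 = 1 ∧
      ∀ (n : ℕ →₀ ℕ) (a : ℕ) (σ : Equiv.Perm (Fin (n a))),
        piOp K ιM A q (vtype a (n a)) (vtype_inj a (n a)) σ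
            (starM K A q N SA.coeff SB.coeff n) =
          starM K A q N SA.coeff SB.coeff n := by
  refine ⟨?_, fun n a σ => ?_⟩
  · rw [starM, ← bot_eq_zero, Finset.Iic_bot, Finset.sum_singleton, bot_eq_zero, Zser_zero_zero,
      map_one, one_mul, tsub_zero, SA.coeff_zero, SB.coeff_zero, map_one, one_mul, symM_zero]
  · rw [starM, piOp_sum]
    exact Finset.sum_congr rfl fun s _ => piOp_symM q hq n a σ _

/-- The `⋆`-product of two `q`-symmetric generating series is again a
`q`-symmetric generating series: its free coefficient equals `1` and each coefficient is
`q`-symmetric in the variables of each type. -/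
theorem star_closed
    (K : Type) [Field K] [CharZero K] (q : K) (hq : q ≠ 0) (hq2 : q ^ 2 ≠ 1)
    (A : Type) [Ring A] [Algebra K A] (N : ℕ) (hN : 2 ≤ N) (SA SB : QSeriesM K A q N) :
    starM K A q N SA.coeff SB.coeff 0 = 1 ∧
      ∀ (n : ℕ →₀ ℕ) (a : ℕ) (σ : Equiv.Perm (Fin (n a))),
        piOp K ιM A q (vtype a (n a)) (vtype_inj a (n a)) σ
            (starM K A q N SA.coeff SB.coeff n) =
          starM K A q N SA.coeff SB.coeff n :=
  star_closed_general K q hq A N SA SB
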